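/- Let L(λ) := M_{τ_1}(Y_1) M_{σ_1}(X_1) (λ M_τ^P − M_σ^P) M_{σ_2}(X_2) M_{τ_2}(Y_2) be an EGFP of P(λ), and suppose 0 ∈ σ. Then: (a) if c_0(σ) < m then (e^T_{m−c_0(σ)} ⊗ I_n) M_{σ_2}(X_2) M_{τ_2}(Y_2) = e^T_{m−c_0(σ,σ_2)} ⊗ I_n, and if i_0(σ) < m then M_{τ_1}(Y_1) M_{σ_1}(X_1) (e_{m−i_0(σ)} ⊗ I_n) = e_{m−i_0(σ_1,σ)} ⊗ I_n; (b) if c_0(σ) = m then (e^T_1 ⊗ I_n) M_{σ_2}(X_2) M_{τ_2}(Y_2) = e^T_1 ⊗ I_n, and if i_0(σ) = m then M_{τ_1}(Y_1) M_{σ_1}(X_1) (e_1 ⊗ I_n) = e_1 ⊗ I_n. -/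

import Mathlib

open Matrix Polynomial

/-- Signed indices: `pos k` denotes `k` and `neg k` denotes `−k`, with `−0` and `0` distinct. -/
inductive SIdx : Type where
  | pos : ℕ → SIdx
  | neg : ℕ → SIdx
deriving DecidableEq

namespace SIdx

/-- The absolute value of a signed index. -/
def val : SIdx → ℕ
  | pos k => k
  | neg k => k

/-- Whether a signed index is negative. -/
def isNeg : SIdx → Bool
  | pos _ => false
  | neg _ => true

/-- The successor `t + 1` of a signed index (`−s + 1 = −(s−1)`). -/
def succ : SIdx → SIdx
  | pos k => pos (k + 1)
  | neg 0 => pos 0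
  | neg (k + 1) => neg k

/-- Negation of a signed index. -/
def negate : SIdx → SIdx
  | pos k => neg k
  | neg k => pos k

end SIdx

/-- The ascending chain `(t, t+1, …, t+p)`. -/
def chainUp (t : SIdx) : ℕ → List SIdx
  | 0 => [t]
  | p + 1 => t :: chainUp t.succ p

/-- The number of consecutions `c_t(α)` of the index tuple `α` at `t` (`−1` when `t ∉ α`):
the largest `p` such that `(t, t+1, …, t+p)` is a subtuple (sublist) of `α`. -/
noncomputable def consAt (α : List SIdx) (t : SIdx) : ℤ :=
  letI := Classical.decPred (fun p : ℕ => (chainUp t p).Sublist α)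
  if t ∈ α then (Nat.findGreatest (fun p : ℕ => (chainUp t p).Sublist α) α.length : ℤ) else -1

/-- The number of inversions `i_t(α)` of the index tuple `α` at `t` (`−1` when `t ∉ α`):
the largest `q` such that `(t+q, …, t+1, t)` is a subtuple (sublist) of `α`. -/
noncomputable def invsAt (α : List SIdx) (t : SIdx) : ℤ :=
  letI := Classical.decPred (fun p : ℕ => ((chainUp t p).reverse).Sublist α)
  if t ∈ α then (Nat.findGreatest (fun p : ℕ => ((chainUp t p).reverse).Sublist α) α.length : ℤ)
  else -1

/-- The Successor Infix Property: between any two equal entries there is an occurrence of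
their successor. -/
def SIP (α : List SIdx) : Prop :=
  ∀ a b : Fin α.length, a < b → α.get a = α.get b →
    ∃ c : Fin α.length, a < c ∧ c < b ∧ α.get c = (α.get a).succ

/-- The `mn × mn` elementary matrix `M_k(X)` (viewed as an `m × m` block matrix with
`n × n` blocks): `M_0(X) = M_{−0}(X) = diag(I_{(m−1)n}, X)`,
`M_m(X) = M_{−m}(X) = diag(X, I_{(m−1)n})`, and for `1 ≤ i ≤ m−1` the matrix `M_i(X)`
(resp. `M_{−i}(X)`) is the identity except for the 2×2 block submatrix
`[[X, I],[I, 0]]` (resp. `[[0, I],[I, X]]`) in block rows/columns `(m−i, m−i+1)`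
(1-indexed). -/
noncomputable def elemMat (m n : ℕ) (k : SIdx) (X : Matrix (Fin n) (Fin n) ℂ) :
    Matrix (Fin m × Fin n) (Fin m × Fin n) ℂ := fun p q =>
  if k.val = 0 then
    if p.1 = q.1 then (if (p.1 : ℕ) = m - 1 then X p.2 q.2 else if p.2 = q.2 then 1 else 0)
    else 0
  else if k.val = m then
    if p.1 = q.1 then (if (p.1 : ℕ) = 0 then X p.2 q.2 else if p.2 = q.2 then 1 else 0)
    else 0
  else
    if (p.1 : ℕ) = m - k.val - 1 ∧ (q.1 : ℕ) = m - k.val - 1 then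
      (if k.isNeg then 0 else X p.2 q.2)
    else if ((p.1 : ℕ) = m - k.val - 1 ∧ (q.1 : ℕ) = m - k.val) ∨
        ((p.1 : ℕ) = m - k.val ∧ (q.1 : ℕ) = m - k.val - 1) then
      (if p.2 = q.2 then 1 else 0)
    else if (p.1 : ℕ) = m - k.val ∧ (q.1 : ℕ) = m - k.val then
      (if k.isNeg then X p.2 q.2 else 0)
    else if p = q then 1 else 0

/-- `M_t(X) = M_{t_1}(X_1) ⋯ M_{t_r}(X_r)` for an index tuple `t` with matrix assignment `Xs`. -/
noncomputable def prodAssign (m n : ℕ) (t : List SIdx) (Xs : List (Matrix (Fin n) (Fin n) ℂ)) :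
    Matrix (Fin m × Fin n) (Fin m × Fin n) ℂ :=
  ((t.zip Xs).map fun p => elemMat m n p.1 p.2).prod

/-- The trivial (Fiedler) matrix assignment of `P(λ) = Σ λ^i A_i`:
`M_i^P = M_i(−A_i)` for `0 ≤ i ≤ m−1`, `M_m^P = (M_{−m}^P)⁻¹ = M_m(A_m⁻¹)`,
`M_{−i}^P = M_{−i}(A_i)` for `1 ≤ i ≤ m`, and `M_{−0}^P = (M_0^P)⁻¹ = M_{−0}((−A_0)⁻¹)`. -/
noncomputable def fiedlerX (m : ℕ) {n : ℕ} (A : ℕ → Matrix (Fin n) (Fin n) ℂ) :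
    SIdx → Matrix (Fin n) (Fin n) ℂ
  | .pos i => if i = m then (A m)⁻¹ else -A i
  | .neg i => if i = 0 then (-A 0)⁻¹ else A i

/-- `M_t^P`, the product of Fiedler matrices of `P` along the index tuple `t`. -/
noncomputable def prodFiedler (m n : ℕ) (A : ℕ → Matrix (Fin n) (Fin n) ℂ) (t : List SIdx) :
    Matrix (Fin m × Fin n) (Fin m × Fin n) ℂ :=
  (t.map fun k => elemMat m n k (fiedlerX m A k)).prod

/-- A nonsingular matrix assignment: the matrices assigned to positions with indices
`±0` or `±m` are nonsingular. -/
def NonsingAssign (m : ℕ) {n : ℕ} (t : List SIdx) (Xs : List (Matrix (Fin n) (Fin n) ℂ)) :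
    Prop :=
  t.length = Xs.length ∧ ∀ p ∈ t.zip Xs, (p.1.val = 0 ∨ p.1.val = m) → IsUnit p.2

/-- The data of an extended generalized Fiedler pencil (EGFP)
`L(λ) = M_{τ₁}(Y₁) M_{σ₁}(X₁) (λ M_τ^P − M_σ^P) M_{σ₂}(X₂) M_{τ₂}(Y₂)`
of the `n × n` matrix polynomial `P(λ) = Σ_{i=0}^m λ^i A_i` of degree `m ≥ 2`. -/
structure EGFPData (m n : ℕ) where
  /-- coefficients of `P` -/
  A : ℕ → Matrix (Fin n) (Fin n) ℂ
  sig : List SIdx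
  tau : List SIdx
  sig1 : List SIdx
  sig2 : List SIdx
  tau1 : List SIdx
  tau2 : List SIdx
  X1 : List (Matrix (Fin n) (Fin n) ℂ)
  X2 : List (Matrix (Fin n) (Fin n) ℂ)
  Y1 : List (Matrix (Fin n) (Fin n) ℂ)
  Y2 : List (Matrix (Fin n) (Fin n) ℂ)
  hm : 2 ≤ m
  hAm : A m ≠ 0
  hsigpos : ∀ k ∈ sig, k.isNeg = false
  htauneg : ∀ k ∈ tau, k.isNeg = true
  /-- `(σ, ω)` is a permutation of `{0, 1, …, m}`, where `τ = −ω`. -/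
  hperm : List.Perm (sig.map SIdx.val ++ tau.map SIdx.val) (List.range (m + 1))
  hsig1 : ∀ k ∈ sig1, k ∈ sig ∧ k.val + 2 ≤ m
  hsig2 : ∀ k ∈ sig2, k ∈ sig ∧ k.val + 2 ≤ m
  htau1 : ∀ k ∈ tau1, k ∈ tau ∧ 2 ≤ k.val
  htau2 : ∀ k ∈ tau2, k ∈ tau ∧ 2 ≤ k.val
  hSIPsig : SIP (sig1 ++ sig ++ sig2)
  hSIPtau : SIP (tau1 ++ tau ++ tau2)
  hX1 : NonsingAssign m sig1 X1
  hX2 : NonsingAssign m sig2 X2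
  hY1 : NonsingAssign m tau1 Y1
  hY2 : NonsingAssign m tau2 Y2
  hA0 : SIdx.neg 0 ∈ tau → IsUnit (A 0)
  hAmUnit : SIdx.pos m ∈ sig → IsUnit (A m)

namespace EGFPData

variable {m n : ℕ}

/-- `M_{τ₁}(Y₁) M_{σ₁}(X₁)`. -/
noncomputable def leftFac (E : EGFPData m n) : Matrix (Fin m × Fin n) (Fin m × Fin n) ℂ :=
  prodAssign m n E.tau1 E.Y1 * prodAssign m n E.sig1 E.X1

/-- `M_{σ₂}(X₂) M_{τ₂}(Y₂)`. -/
noncomputable def rightFac (E : EGFPData m n) : Matrix (Fin m × Fin n) (Fin m × Fin n) ℂ :=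
  prodAssign m n E.sig2 E.X2 * prodAssign m n E.tau2 E.Y2

/-- The coefficient `L₁` of `λ` in `L(λ) = λ L₁ − L₀`. -/
noncomputable def L1 (E : EGFPData m n) : Matrix (Fin m × Fin n) (Fin m × Fin n) ℂ :=
  E.leftFac * prodFiedler m n E.A E.tau * E.rightFac

/-- The constant term `L₀` in `L(λ) = λ L₁ − L₀`. -/
noncomputable def L0 (E : EGFPData m n) : Matrix (Fin m × Fin n) (Fin m × Fin n) ℂ :=
  E.leftFac * prodFiedler m n E.A E.sig * E.rightFac

end EGFPData

/-- The `(i, j)` block (of size `n × n`) of an `mn × mn` matrix. -/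
def blockOf {m n : ℕ} (M : Matrix (Fin m × Fin n) (Fin m × Fin n) ℂ) (i j : Fin m) :
    Matrix (Fin n) (Fin n) ℂ := fun p q => M (i, p) (j, q)

/-- Block penta-diagonal: all blocks `B_{ij}` with `|i − j| > 2` vanish. -/
def BlockPenta {m n : ℕ} (M : Matrix (Fin m × Fin n) (Fin m × Fin n) ℂ) : Prop :=
  ∀ i j : Fin m, ((i : ℕ) + 2 < (j : ℕ) ∨ (j : ℕ) + 2 < (i : ℕ)) → blockOf M i j = 0

/-- Block tridiagonal: all blocks `B_{ij}` with `|i − j| > 1` vanish. -/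
def BlockTri {m n : ℕ} (M : Matrix (Fin m × Fin n) (Fin m × Fin n) ℂ) : Prop :=
  ∀ i j : Fin m, ((i : ℕ) + 1 < (j : ℕ) ∨ (j : ℕ) + 1 < (i : ℕ)) → blockOf M i j = 0

/-- `e_j^T ⊗ I_n` as an `n × mn` matrix, for a 1-indexed block index `j`
(zero when `j` is out of range). -/
def rowSel (m n : ℕ) (j : ℤ) : Matrix (Fin n) (Fin m × Fin n) ℂ :=
  fun p q => if ((q.1 : ℕ) : ℤ) + 1 = j ∧ p = q.2 then 1 else 0

/-- `e_j ⊗ I_n` as an `mn × n` matrix, for a 1-indexed block index `j`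
(zero when `j` is out of range). -/
def colSel (m n : ℕ) (j : ℤ) : Matrix (Fin m × Fin n) (Fin n) ℂ :=
  fun p q => if ((p.1 : ℕ) : ℤ) + 1 = j ∧ p.2 = q then 1 else 0

/-- The matrix polynomial `P(λ) = Σ_{i=0}^m λ^i A_i` as an `n × n` matrix over `ℂ[λ]`. -/
noncomputable def polyP (m n : ℕ) (A : ℕ → Matrix (Fin n) (Fin n) ℂ) :
    Matrix (Fin n) (Fin n) (Polynomial ℂ) := fun p q =>
  ∑ i ∈ Finset.range (m + 1), Polynomial.C (A i p q) * Polynomial.X ^ i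

-- chains
def pchain (c : ℕ) : List SIdx := (List.range (c + 1)).map SIdx.pos

def rchain (c : ℕ) : List SIdx := (pchain c).reverse

lemma pchain_zero : pchain 0 = [.pos 0] := rfl

lemma pchain_succ (c : ℕ) : pchain (c + 1) = pchain c ++ [.pos (c + 1)] := by
  simp [pchain, List.range_succ]

lemma rchain_succ (c : ℕ) : rchain (c + 1) = .pos (c + 1) :: rchain c := by
  simp [rchain, pchain_succ]

lemma pchain_length (c : ℕ) : (pchain c).length = c + 1 := by simp [pchain]

lemma rchain_length (c : ℕ) : (rchain c).length = c + 1 := by simp [rchain, pchain_length]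

lemma pos_mem_pchain (c : ℕ) : SIdx.pos c ∈ pchain c := by
  simp [pchain]

lemma pos_mem_rchain (c : ℕ) : SIdx.pos c ∈ rchain c := by
  simp [rchain, pos_mem_pchain]

lemma mem_pchain_iff {c : ℕ} {x : SIdx} : x ∈ pchain c ↔ ∃ j ≤ c, x = .pos j := by
  simp [pchain, Nat.lt_succ_iff, eq_comm]

lemma pchain_mono {a b : ℕ} (h : a ≤ b) : (pchain a).Sublist (pchain b) :=
  (List.range_sublist.mpr (by omega)).map _

lemma rchain_mono {a b : ℕ} (h : a ≤ b) : (rchain a).Sublist (rchain b) :=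
  (pchain_mono h).reverse

lemma chainUp_pos (t p : ℕ) : chainUp (.pos t) p = (List.range (p + 1)).map (fun i => SIdx.pos (t + i)) := by
  induction p generalizing t with
  | zero => simp [chainUp, List.range_succ]
  | succ p ih =>
      rw [chainUp, show (SIdx.pos t).succ = .pos (t+1) from rfl, ih]
      conv_rhs => rw [List.range_succ_eq_map]
      simp only [List.map_cons, List.map_map, List.cons.injEq, Nat.add_zero, true_and]
      apply List.map_congr_left
      intro i _
      simp only [Function.comp_apply]
      congr 1
      omega

lemma chainUp_pos_zero (p : ℕ) : chainUp (.pos 0) p = pchain p := by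
  simp [chainUp_pos, pchain]

-- characterization of consAt
lemma consAt_eq_iff {α : List SIdx} {c : ℕ} (hmem : SIdx.pos 0 ∈ α) :
    consAt α (.pos 0) = c ↔ (pchain c).Sublist α ∧ ¬ (pchain (c+1)).Sublist α := by
  classical
  have hP0 : (chainUp (.pos 0) 0).Sublist α := by
    rw [chainUp_pos_zero, pchain_zero, List.singleton_sublist]; exact hmem
  have hlen : ∀ p : ℕ, (chainUp (.pos 0) p).Sublist α → p ≤ α.length := by
    intro p hp
    have := hp.length_le
    rw [chainUp_pos_zero, pchain_length] at this; omega
  rw [consAt, if_pos hmem]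
  set P := fun p : ℕ => (chainUp (.pos 0) p).Sublist α with hPdef
  letI inst : DecidablePred P := Classical.decPred P
  set g := @Nat.findGreatest P inst α.length with hg
  have hfg : P g := @Nat.findGreatest_spec 0 P inst α.length (Nat.zero_le _) hP0
  have hnot : ¬ P (g + 1) := by
    intro h
    have h1 : g + 1 ≤ α.length := hlen _ h
    have := @Nat.le_findGreatest (g+1) P inst α.length h1 h
    omega
  constructor
  · rintro h
    have hc : g = c := by exact_mod_cast h
    rw [hc] at hfg hnot
    rw [hPdef] at hfg hnot
    simp only [chainUp_pos_zero] at hfg hnot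
    exact ⟨hfg, hnot⟩
  · rintro ⟨h1, h2⟩
    have hle : c ≤ g := by
      rw [hg]
      apply Nat.le_findGreatest
      · have := h1.length_le; rw [pchain_length] at this; omega
      · rw [hPdef]; simpa [chainUp_pos_zero] using h1
    have hge : g ≤ c := by
      by_contra hgt
      push_neg at hgt
      have hga : (pchain g).Sublist α := by
        simpa [hPdef, chainUp_pos_zero] using hfg
      exact h2 ((pchain_mono (by omega)).trans hga)
    have : g = c := le_antisymm hge hle
    exact_mod_cast congrArg (Nat.cast : ℕ → ℤ) this

lemma invsAt_eq_iff {α : List SIdx} {c : ℕ} (hmem : SIdx.pos 0 ∈ α) :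
    invsAt α (.pos 0) = c ↔ (rchain c).Sublist α ∧ ¬ (rchain (c+1)).Sublist α := by
  classical
  have hP0 : ((chainUp (.pos 0) 0).reverse).Sublist α := by
    rw [chainUp_pos_zero, pchain_zero]; simpa using hmem
  have hlen : ∀ p : ℕ, ((chainUp (.pos 0) p).reverse).Sublist α → p ≤ α.length := by
    intro p hp
    have := hp.length_le
    rw [chainUp_pos_zero, List.length_reverse, pchain_length] at this; omega
  rw [invsAt, if_pos hmem]
  set P := fun p : ℕ => ((chainUp (.pos 0) p).reverse).Sublist α with hPdef
  letI inst : DecidablePred P := Classical.decPred P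
  set g := @Nat.findGreatest P inst α.length with hg
  have hfg : P g := @Nat.findGreatest_spec 0 P inst α.length (Nat.zero_le _) hP0
  have hnot : ¬ P (g + 1) := by
    intro h
    have h1 : g + 1 ≤ α.length := hlen _ h
    have := @Nat.le_findGreatest (g+1) P inst α.length h1 h
    omega
  constructor
  · rintro h
    have hc : g = c := by exact_mod_cast h
    rw [hc] at hfg hnot
    rw [hPdef] at hfg hnot
    simp only [chainUp_pos_zero] at hfg hnot
    exact ⟨hfg, hnot⟩
  · rintro ⟨h1, h2⟩
    have hle : c ≤ g := by
      rw [hg]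
      apply Nat.le_findGreatest
      · have := h1.length_le; rw [rchain_length] at this; omega
      · rw [hPdef]; simpa [chainUp_pos_zero, rchain] using h1
    have hge : g ≤ c := by
      by_contra hgt
      push_neg at hgt
      have hga : (rchain g).Sublist α := by
        simpa [hPdef, chainUp_pos_zero, rchain] using hfg
      exact h2 ((rchain_mono (by omega)).trans hga)
    have : g = c := le_antisymm hge hle
    exact_mod_cast congrArg (Nat.cast : ℕ → ℤ) this

lemma getmid (u v : List SIdx) (y : SIdx) : (u ++ y :: v)[u.length]'(by simp) = y := by
  rw [List.getElem_append_right (le_refl _)]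
  simp

lemma getmid' (u v : List SIdx) (y : SIdx) (L : List SIdx) (hL : L = u ++ y :: v) (i : ℕ)
    (hi : i = u.length) (h : i < L.length) : L[i] = y := by
  subst hL; subst hi; exact getmid u v y

lemma getmem2 (u v w L : List SIdx) (hL : L = u ++ v ++ w) (i : ℕ) (hi : i < L.length)
    (h1 : u.length ≤ i) (h2 : i < u.length + v.length) : L[i] ∈ v := by
  subst hL
  have hi' : i < (u ++ v ++ w).length := hi
  have e1 : (u ++ v ++ w)[i] = (u ++ v)[i]'(by simp; omega) :=
    List.getElem_append_left (by simp; omega)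
  have e2 : (u ++ v)[i]'(by simp; omega) = v[i - u.length]'(by simp at *; omega) :=
    List.getElem_append_right h1
  rw [e1, e2]; exact List.getElem_mem _

lemma sip_split {L w₁ w₂ w₃ : List SIdx} {x : SIdx} (h : SIP L)
    (hL : L = w₁ ++ x :: (w₂ ++ x :: w₃)) : x.succ ∈ w₂ := by
  subst hL
  set L := w₁ ++ x :: (w₂ ++ x :: w₃) with hLdef
  have hlen : L.length = w₁.length + w₂.length + w₃.length + 2 := by
    simp [hLdef]; omega
  have haval : w₁.length < L.length := by omega
  have hbval : w₁.length + 1 + w₂.length < L.length := by omega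
  set a : Fin L.length := ⟨w₁.length, haval⟩ with hadef
  set b : Fin L.length := ⟨w₁.length + 1 + w₂.length, hbval⟩ with hbdef
  have hga : L.get a = x := getmid w₁ _ x
  have hgb : L.get b = x :=
    getmid' (w₁ ++ x :: w₂) w₃ x L (by simp [hLdef]) _ (by simp [hbdef]; omega) b.isLt
  obtain ⟨c, hac, hcb, hgc⟩ := h a b (by simp [hadef, hbdef]; omega) (hga.trans hgb.symm)
  rw [hga] at hgc
  have hc1 : w₁.length < (c : ℕ) := hac
  have hc2 : (c : ℕ) < w₁.length + 1 + w₂.length := hcb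
  have hmem : L.get c ∈ w₂ :=
    getmem2 (w₁ ++ [x]) w₂ (x :: w₃) L (by simp [hLdef]) (c : ℕ) c.isLt
      (by simp; omega) (by simp; omega)
  rw [hgc] at hmem
  exact hmem

lemma rchain_eq_cons (q : ℕ) : ∃ t, rchain q = .pos q :: t := by
  cases q with
  | zero => exact ⟨[], by simp [rchain, pchain, List.range_succ]⟩
  | succ q => exact ⟨rchain q, rchain_succ q⟩

lemma chain_ext_row {pre W post : List SIdx} {c : ℕ}
    (h : SIP (pre ++ W ++ (.pos c :: post)))
    (hc : (pchain c).Sublist W) : (pchain (c+1)).Sublist W := by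
  have hdecomp : pchain c = (List.range c).map SIdx.pos ++ [SIdx.pos c] := by
    simp [pchain, List.range_succ]
  rw [hdecomp] at hc
  obtain ⟨u, v, hW, hu, hv⟩ := List.append_sublist_iff.mp hc
  have hmemv : SIdx.pos c ∈ v := List.singleton_sublist.mp hv
  obtain ⟨v₁, v₂, hv12⟩ := List.append_of_mem hmemv
  have hsucc : (SIdx.pos c).succ ∈ v₂ :=
    sip_split (w₁ := pre ++ u ++ v₁) (w₂ := v₂) (w₃ := post) h (by rw [hW, hv12]; simp)
  have hsucc' : SIdx.pos (c+1) ∈ v₂ := hsucc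
  have h2 : ([SIdx.pos c] ++ [SIdx.pos (c+1)]).Sublist ((v₁ ++ [SIdx.pos c]) ++ v₂) :=
    (List.sublist_append_right _ _).append (List.singleton_sublist.mpr hsucc')
  have e1 : pchain (c+1) = (List.map SIdx.pos (List.range c)) ++ ([SIdx.pos c] ++ [SIdx.pos (c+1)]) := by
    rw [pchain_succ, hdecomp]; simp
  have e2 : W = u ++ ((v₁ ++ [SIdx.pos c]) ++ v₂) := by rw [hW, hv12]; simp
  rw [e1, e2]; exact hu.append h2

lemma chain_ext_col {pre W post : List SIdx} {q : ℕ}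
    (h : SIP (pre ++ (.pos q :: (W ++ post))))
    (hq : (rchain q).Sublist W) : (rchain (q+1)).Sublist W := by
  obtain ⟨t, ht⟩ := rchain_eq_cons q
  rw [ht] at hq
  have hq' : ([SIdx.pos q] ++ t).Sublist W := hq
  obtain ⟨u, v, hW, hu, hv⟩ := List.append_sublist_iff.mp hq'
  have hmemu : SIdx.pos q ∈ u := List.singleton_sublist.mp hu
  obtain ⟨u₁, u₂, hu12⟩ := List.append_of_mem hmemu
  have hsucc : (SIdx.pos q).succ ∈ u₁ :=
    sip_split (w₁ := pre) (w₂ := u₁) (w₃ := u₂ ++ v ++ post) h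
      (by rw [hW, hu12]; simp)
  have hsucc' : SIdx.pos (q+1) ∈ u₁ := hsucc
  have h2 : (SIdx.pos q :: t).Sublist (SIdx.pos q :: (u₂ ++ v)) :=
    List.Sublist.cons₂ _ (hv.trans (List.sublist_append_right _ _))
  have e1 : rchain (q+1) = [SIdx.pos (q+1)] ++ (SIdx.pos q :: t) := by
    rw [rchain_succ, ht]; rfl
  have e2 : W = u₁ ++ (SIdx.pos q :: (u₂ ++ v)) := by rw [hW, hu12]; simp
  rw [e1, e2]
  exact (List.singleton_sublist.mpr hsucc').append h2

lemma sip_succ_mem {L₁ L₂ : List SIdx} {x : SIdx} (h : SIP (L₁ ++ L₂))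
    (h1 : x ∈ L₁) (h2 : x ∈ L₂) : x.succ ∈ L₁ ∨ x.succ ∈ L₂ := by
  obtain ⟨a, b, rfl⟩ := List.append_of_mem h1
  obtain ⟨c, d, rfl⟩ := List.append_of_mem h2
  have := sip_split (x := x) (w₁ := a) (w₂ := b ++ c) (w₃ := d) h (by simp)
  rcases List.mem_append.mp this with hm | hm
  · left; simp [hm]
  · right; simp [hm]

section MatrixLemmas

variable {m n : ℕ}

lemma prodAssign_nil (Xs : List (Matrix (Fin n) (Fin n) ℂ)) :
    prodAssign m n [] Xs = 1 := by simp [prodAssign]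

lemma prodAssign_cons (k : SIdx) (t : List SIdx) (X : Matrix (Fin n) (Fin n) ℂ) (Xs) :
    prodAssign m n (k :: t) (X :: Xs) = elemMat m n k X * prodAssign m n t Xs := by
  simp [prodAssign]

lemma prodAssign_snoc (t : List SIdx) (Xs : List (Matrix (Fin n) (Fin n) ℂ))
    (k : SIdx) (B : Matrix (Fin n) (Fin n) ℂ) (h : t.length = Xs.length) :
    prodAssign m n (t ++ [k]) (Xs ++ [B]) = prodAssign m n t Xs * elemMat m n k B := by
  unfold prodAssign
  rw [List.zip_append (by simpa using h), List.map_append, List.prod_append]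
  simp

lemma rowSel_mul (r : ℕ) (hr : r < m) (M : Matrix (Fin m × Fin n) (Fin m × Fin n) ℂ) :
    rowSel m n ((r : ℤ) + 1) * M = Matrix.of (fun p q => M (⟨r, hr⟩, p) q) := by
  ext p q
  rw [Matrix.mul_apply]
  rw [Finset.sum_eq_single ((⟨r, hr⟩, p) : Fin m × Fin n)]
  · simp [rowSel, Matrix.of_apply]
  · intro b _ hb
    have : rowSel m n ((r : ℤ) + 1) p b = 0 := by
      rw [rowSel, if_neg]
      rintro ⟨h1, h2⟩
      apply hb
      have hb1 : (b.1 : ℕ) = r := by omega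
      exact Prod.ext (Fin.ext hb1) h2.symm
    rw [this, zero_mul]
  · intro h; exact absurd (Finset.mem_univ _) h

lemma mul_colSel (r : ℕ) (hr : r < m) (M : Matrix (Fin m × Fin n) (Fin m × Fin n) ℂ) :
    M * colSel m n ((r : ℤ) + 1) = Matrix.of (fun p q => M p (⟨r, hr⟩, q)) := by
  ext p q
  rw [Matrix.mul_apply]
  rw [Finset.sum_eq_single ((⟨r, hr⟩, q) : Fin m × Fin n)]
  · simp [colSel, Matrix.of_apply]
  · intro b _ hb
    have : colSel m n ((r : ℤ) + 1) b q = 0 := by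
      rw [colSel, if_neg]
      rintro ⟨h1, h2⟩
      apply hb
      have hb1 : (b.1 : ℕ) = r := by omega
      exact Prod.ext (Fin.ext hb1) h2
    rw [this, mul_zero]
  · intro h; exact absurd (Finset.mem_univ _) h

/-- condition under which block row/column `r` (0-indexed) of `elemMat m n k X`
is an identity row/column -/
def Untouched (m : ℕ) (k : SIdx) (r : ℕ) : Prop :=
  k.val ≤ m ∧ (k.val = 0 → r ≠ m - 1) ∧ (k.val = m → r ≠ 0) ∧
    (0 < k.val → k.val < m → r ≠ m - k.val - 1 ∧ r ≠ m - k.val)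

lemma elemMat_row_id (k : SIdx) (X : Matrix (Fin n) (Fin n) ℂ) (r : ℕ) (hr : r < m)
    (h : Untouched m k r) (p : Fin n) (q : Fin m × Fin n) :
    elemMat m n k X ((⟨r, hr⟩ : Fin m), p) q = if ((⟨r, hr⟩ : Fin m), p) = q then 1 else 0 := by
  obtain ⟨hval, h0, hm', hmid⟩ := h
  obtain ⟨q1, q2⟩ := q
  simp only [elemMat]
  split_ifs <;> simp_all [Prod.ext_iff, Fin.ext_iff] <;> omega

lemma elemMat_col_id (k : SIdx) (X : Matrix (Fin n) (Fin n) ℂ) (r : ℕ) (hr : r < m)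
    (h : Untouched m k r) (p : Fin m × Fin n) (q : Fin n) :
    elemMat m n k X p ((⟨r, hr⟩ : Fin m), q) = if p = ((⟨r, hr⟩ : Fin m), q) then 1 else 0 := by
  obtain ⟨hval, h0, hm', hmid⟩ := h
  obtain ⟨p1, p2⟩ := p
  simp only [elemMat]
  split_ifs <;> simp_all [Prod.ext_iff, Fin.ext_iff] <;> omega

lemma rowSel_elem_untouched (k : SIdx) (X : Matrix (Fin n) (Fin n) ℂ) (r : ℕ) (hr : r < m)
    (hU : Untouched m k r) :
    rowSel m n ((r : ℤ) + 1) * elemMat m n k X = rowSel m n ((r : ℤ) + 1) := by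
  rw [rowSel_mul r hr]
  ext p q
  rw [Matrix.of_apply, elemMat_row_id k X r hr hU p q, rowSel]
  obtain ⟨q1, q2⟩ := q
  split_ifs <;> simp_all [Prod.ext_iff, Fin.ext_iff] <;> omega

lemma colSel_elem_untouched (k : SIdx) (X : Matrix (Fin n) (Fin n) ℂ) (r : ℕ) (hr : r < m)
    (hU : Untouched m k r) :
    elemMat m n k X * colSel m n ((r : ℤ) + 1) = colSel m n ((r : ℤ) + 1) := by
  rw [mul_colSel r hr]
  ext p q
  rw [Matrix.of_apply, elemMat_col_id k X r hr hU p q, colSel]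
  obtain ⟨p1, p2⟩ := p
  split_ifs <;> simp_all [Prod.ext_iff, Fin.ext_iff] <;> omega

lemma rowSel_elem_shift (v : ℕ) (hv1 : 1 ≤ v) (hv : v < m) (X : Matrix (Fin n) (Fin n) ℂ) :
    rowSel m n ((↑(m - v) : ℤ) + 1) * elemMat m n (.pos v) X
      = rowSel m n ((↑(m - v - 1) : ℤ) + 1) := by
  rw [rowSel_mul (m - v) (by omega)]
  ext p q
  rw [Matrix.of_apply]
  obtain ⟨q1, q2⟩ := q
  have hne : ¬ ((m - v : ℕ) = m - v - 1) := by omega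
  have hv0 : ¬ (v = 0) := by omega
  have hvm : ¬ (v = m) := by omega
  by_cases h1 : (q1 : ℕ) = m - v - 1
  · have hne2 : ¬ ((q1 : ℕ) = m - v) := by omega
    by_cases h2 : p = q2 <;>
      simp [elemMat, rowSel, SIdx.val, SIdx.isNeg, h1, h2, hne, hne2, hv0, hvm, Prod.ext_iff,
        Fin.ext_iff]
  · by_cases h3 : (q1 : ℕ) = m - v <;>
      simp [elemMat, rowSel, SIdx.val, SIdx.isNeg, h1, h3, hne, hv0, hvm, Prod.ext_iff, Fin.ext_iff] <;>
      omega

lemma colSel_elem_shift (v : ℕ) (hv1 : 1 ≤ v) (hv : v < m) (X : Matrix (Fin n) (Fin n) ℂ) :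
    elemMat m n (.pos v) X * colSel m n ((↑(m - v) : ℤ) + 1)
      = colSel m n ((↑(m - v - 1) : ℤ) + 1) := by
  rw [mul_colSel (m - v) (by omega)]
  ext p q
  rw [Matrix.of_apply]
  obtain ⟨p1, p2⟩ := p
  have hne : ¬ ((m - v : ℕ) = m - v - 1) := by omega
  have hv0 : ¬ (v = 0) := by omega
  have hvm : ¬ (v = m) := by omega
  by_cases h1 : (p1 : ℕ) = m - v - 1
  · have hne2 : ¬ ((p1 : ℕ) = m - v) := by omega
    by_cases h2 : p2 = q <;>
      simp [elemMat, colSel, SIdx.val, SIdx.isNeg, h1, h2, hne, hne2, hv0, hvm, Prod.ext_iff,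
        Fin.ext_iff]
  · by_cases h3 : (p1 : ℕ) = m - v <;>
      simp [elemMat, colSel, SIdx.val, SIdx.isNeg, h1, h3, hne, hv0, hvm, Prod.ext_iff, Fin.ext_iff] <;>
      omega

lemma rowSel_prod_untouched (r : ℕ) (hr : r < m) :
    ∀ (t : List SIdx) (Xs : List (Matrix (Fin n) (Fin n) ℂ)),
      (∀ k ∈ t, Untouched m k r) →
      rowSel m n ((r : ℤ) + 1) * prodAssign m n t Xs = rowSel m n ((r : ℤ) + 1)
  | [], Xs, _ => by simp [prodAssign_nil]
  | k :: t, [], _ => by simp [prodAssign, List.zip_nil_right]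
  | k :: t, X :: Xs, h => by
      rw [prodAssign_cons, ← Matrix.mul_assoc,
        rowSel_elem_untouched k X r hr (h k List.mem_cons_self),
        rowSel_prod_untouched r hr t Xs (fun k' hk' => h k' (List.mem_cons_of_mem _ hk'))]

lemma colSel_prod_untouched (r : ℕ) (hr : r < m) :
    ∀ (t : List SIdx) (Xs : List (Matrix (Fin n) (Fin n) ℂ)),
      (∀ k ∈ t, Untouched m k r) →
      prodAssign m n t Xs * colSel m n ((r : ℤ) + 1) = colSel m n ((r : ℤ) + 1)
  | [], Xs, _ => by simp [prodAssign_nil]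
  | k :: t, [], _ => by simp [prodAssign, List.zip_nil_right]
  | k :: t, X :: Xs, h => by
      rw [prodAssign_cons, Matrix.mul_assoc,
        colSel_prod_untouched r hr t Xs (fun k' hk' => h k' (List.mem_cons_of_mem _ hk')),
        colSel_elem_untouched k X r hr (h k List.mem_cons_self)]

end MatrixLemmas

lemma SIdx.eq_pos {k : SIdx} (h : k.isNeg = false) : k = .pos k.val := by
  cases k <;> simp_all [SIdx.isNeg, SIdx.val]

lemma cons_sublist_cases {x k : SIdx} {t T : List SIdx} (h : (x :: t).Sublist (k :: T)) :
    (x :: t).Sublist T ∨ (x = k ∧ t.Sublist T) := by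
  cases h with
  | cons _ h => exact Or.inl h
  | cons_cons _ h => exact Or.inr ⟨rfl, h⟩

lemma snoc_sublist_cases {x k : SIdx} {t T : List SIdx} (h : (t ++ [x]).Sublist (T ++ [k])) :
    (t ++ [x]).Sublist T ∨ (x = k ∧ t.Sublist T) := by
  have h' : (x :: t.reverse).Sublist (k :: T.reverse) := by
    have := h.reverse
    simpa using this
  rcases cons_sublist_cases h' with h2 | ⟨rfl, h2⟩
  · left
    have := h2.reverse
    simpa using this
  · right
    exact ⟨rfl, by simpa using h2.reverse⟩

section Main

variable {m n : ℕ}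

lemma row_main (pre : List SIdx) :
    ∀ (γ : List SIdx) (Xs : List (Matrix (Fin n) (Fin n) ℂ)) (W : List SIdx) (c : ℕ),
      γ.length = Xs.length →
      SIP (pre ++ W ++ γ) →
      (∀ k ∈ γ, k.isNeg = false ∧ k.val + 2 ≤ m) →
      (pchain c).Sublist W → ¬ (pchain (c+1)).Sublist W → c < m →
      ∃ c' : ℕ, c' < m ∧ (pchain c').Sublist (W ++ γ) ∧ ¬ (pchain (c'+1)).Sublist (W ++ γ) ∧
        rowSel m n ((↑(m - c - 1) : ℤ) + 1) * prodAssign m n γ Xs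
          = rowSel m n ((↑(m - c' - 1) : ℤ) + 1)
  | [], Xs, W, c, hlen, hSIP, hγ, hc, hc1, hcm =>
      ⟨c, hcm, by simpa using hc, by simpa using hc1, by simp [prodAssign_nil]⟩
  | k :: γ, [], W, c, hlen, hSIP, hγ, hc, hc1, hcm => by simp at hlen
  | k :: γ, X :: Xs, W, c, hlen, hSIP, hγ, hc, hc1, hcm => by
      obtain ⟨hkpos, hkval⟩ := hγ k List.mem_cons_self
      have hk : k = .pos k.val := SIdx.eq_pos hkpos
      have hvc : k.val ≠ c := by
        intro hvceq
        apply hc1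
        refine chain_ext_row (pre := pre) (W := W) (post := γ) ?_ hc
        have hkc : k = .pos c := by rw [hk, hvceq]
        rw [← hkc]
        exact hSIP
      have hSIP' : SIP (pre ++ (W ++ [k]) ++ γ) := by
        rw [show pre ++ (W ++ [k]) ++ γ = pre ++ W ++ (k :: γ) from by simp]
        exact hSIP
      have hγ' : ∀ k' ∈ γ, k'.isNeg = false ∧ k'.val + 2 ≤ m :=
        fun k' hk' => hγ k' (List.mem_cons_of_mem _ hk')
      rcases eq_or_ne k.val (c+1) with hvc1 | hvc1
      · -- shift case
        have hstep : rowSel m n ((↑(m - c - 1) : ℤ) + 1) * elemMat m n k X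
            = rowSel m n ((↑(m - (c+1) - 1) : ℤ) + 1) := by
          have hsh := rowSel_elem_shift (m := m) (n := n) (v := k.val) (by omega) (by omega) X
          rw [← hk] at hsh
          rw [show m - c - 1 = m - k.val from by omega] at *
          rw [show m - (c+1) - 1 = m - k.val - 1 from by omega]
          exact hsh
        have hchain : (pchain (c+1)).Sublist (W ++ [k]) := by
          rw [pchain_succ]
          refine hc.append ?_
          rw [hk, hvc1]
        have hnot : ¬ (pchain (c+1+1)).Sublist (W ++ [k]) := by
          intro hbad
          rw [pchain_succ] at hbad
          rcases snoc_sublist_cases hbad with hbad | ⟨heq, hbad⟩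
          · exact hc1 ((List.sublist_append_left _ _).trans hbad)
          · rw [hk] at heq
            have : c + 1 + 1 = k.val := by
              have := congrArg SIdx.val heq
              simpa [SIdx.val] using this
            omega
        obtain ⟨c', hc'm, hch, hch1, heq⟩ := row_main pre γ Xs (W ++ [k]) (c+1)
          (by simpa using hlen) hSIP' hγ' hchain hnot (by omega)
        refine ⟨c', hc'm, ?_, ?_, ?_⟩
        · rw [show W ++ k :: γ = (W ++ [k]) ++ γ from by simp]; exact hch
        · rw [show W ++ k :: γ = (W ++ [k]) ++ γ from by simp]; exact hch1
        · rw [prodAssign_cons, ← Matrix.mul_assoc, hstep, heq]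
      · -- untouched case
        have hU : Untouched m k (m - c - 1) :=
          ⟨by omega, fun h => by omega, fun h => by omega,
            fun h1 h2 => ⟨by omega, by omega⟩⟩
        have hstep := rowSel_elem_untouched (m := m) (n := n) k X (m - c - 1) (by omega) hU
        have hchain : (pchain c).Sublist (W ++ [k]) :=
          hc.trans (List.sublist_append_left _ _)
        have hnot : ¬ (pchain (c+1)).Sublist (W ++ [k]) := by
          intro hbad
          rw [pchain_succ] at hbad
          rcases snoc_sublist_cases hbad with hbad | ⟨heq, hbad⟩
          · exact hc1 (by rw [pchain_succ]; exact hbad)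
          · rw [hk] at heq
            have : c + 1 = k.val := by
              have := congrArg SIdx.val heq
              simpa [SIdx.val] using this
            omega
        obtain ⟨c', hc'm, hch, hch1, heq⟩ := row_main pre γ Xs (W ++ [k]) c
          (by simpa using hlen) hSIP' hγ' hchain hnot hcm
        refine ⟨c', hc'm, ?_, ?_, ?_⟩
        · rw [show W ++ k :: γ = (W ++ [k]) ++ γ from by simp]; exact hch
        · rw [show W ++ k :: γ = (W ++ [k]) ++ γ from by simp]; exact hch1
        · rw [prodAssign_cons, ← Matrix.mul_assoc, hstep, heq]

lemma col_main (post : List SIdx) (γ : List SIdx) :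
    ∀ (Xs : List (Matrix (Fin n) (Fin n) ℂ)) (W : List SIdx) (c : ℕ),
      γ.length = Xs.length →
      SIP (γ ++ (W ++ post)) →
      (∀ k ∈ γ, k.isNeg = false ∧ k.val + 2 ≤ m) →
      (rchain c).Sublist W → ¬ (rchain (c+1)).Sublist W → c < m →
      ∃ c' : ℕ, c' < m ∧ (rchain c').Sublist (γ ++ W) ∧ ¬ (rchain (c'+1)).Sublist (γ ++ W) ∧
        prodAssign m n γ Xs * colSel m n ((↑(m - c - 1) : ℤ) + 1)
          = colSel m n ((↑(m - c' - 1) : ℤ) + 1) := by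
  induction γ using List.reverseRecOn with
  | nil =>
      intro Xs W c hlen hSIP hγ hc hc1 hcm
      exact ⟨c, hcm, by simpa using hc, by simpa using hc1, by simp [prodAssign_nil]⟩
  | append_singleton γ k ih =>
      intro Xs W c hlen hSIP hγ hc hc1 hcm
      rcases List.eq_nil_or_concat Xs with rfl | ⟨Xs', B, rfl⟩
      · simp at hlen
      rw [List.concat_eq_append] at hlen ⊢
      have hlen' : γ.length = Xs'.length := by simpa using hlen
      obtain ⟨hkpos, hkval⟩ := hγ k (by simp)
      have hk : k = .pos k.val := SIdx.eq_pos hkpos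
      have hvc : k.val ≠ c := by
        intro hvceq
        apply hc1
        refine chain_ext_col (pre := γ) (W := W) (post := post) ?_ hc
        have hkc : k = .pos c := by rw [hk, hvceq]
        rw [show γ ++ (SIdx.pos c :: (W ++ post)) = (γ ++ [SIdx.pos c]) ++ (W ++ post) from by simp,
          ← hkc]
        exact hSIP
      have hSIP' : SIP (γ ++ ((k :: W) ++ post)) := by
        rw [show γ ++ ((k :: W) ++ post) = (γ ++ [k]) ++ (W ++ post) from by simp]
        exact hSIP
      have hγ' : ∀ k' ∈ γ, k'.isNeg = false ∧ k'.val + 2 ≤ m :=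
        fun k' hk' => hγ k' (by simp [hk'])
      rcases eq_or_ne k.val (c+1) with hvc1 | hvc1
      · have hstep : elemMat m n k B * colSel m n ((↑(m - c - 1) : ℤ) + 1)
            = colSel m n ((↑(m - (c+1) - 1) : ℤ) + 1) := by
          have hsh := colSel_elem_shift (m := m) (n := n) (v := k.val) (by omega) (by omega) B
          rw [← hk] at hsh
          rw [show m - c - 1 = m - k.val from by omega] at *
          rw [show m - (c+1) - 1 = m - k.val - 1 from by omega]
          exact hsh
        have hchain : (rchain (c+1)).Sublist (k :: W) := by
          rw [rchain_succ]
          have : SIdx.pos (c+1) = k := by rw [hk, hvc1]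
          rw [this]
          exact hc.cons₂ k
        have hnot : ¬ (rchain (c+1+1)).Sublist (k :: W) := by
          intro hbad
          rw [rchain_succ] at hbad
          rcases cons_sublist_cases hbad with hbad | ⟨heq, hbad⟩
          · exact hc1 ((List.sublist_cons_self _ _).trans hbad)
          · rw [hk] at heq
            have : c + 1 + 1 = k.val := by
              have := congrArg SIdx.val heq
              simpa [SIdx.val] using this
            omega
        obtain ⟨c', hc'm, hch, hch1, heq⟩ := ih Xs' (k :: W) (c+1)
          hlen' hSIP' hγ' hchain hnot (by omega)
        refine ⟨c', hc'm, ?_, ?_, ?_⟩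
        · rw [show γ ++ [k] ++ W = γ ++ (k :: W) from by simp]; exact hch
        · rw [show γ ++ [k] ++ W = γ ++ (k :: W) from by simp]; exact hch1
        · rw [prodAssign_snoc γ Xs' k B hlen', Matrix.mul_assoc, hstep, heq]
      · have hU : Untouched m k (m - c - 1) :=
          ⟨by omega, fun h => by omega, fun h => by omega,
            fun h1 h2 => ⟨by omega, by omega⟩⟩
        have hstep := colSel_elem_untouched (m := m) (n := n) k B (m - c - 1) (by omega) hU
        have hchain : (rchain c).Sublist (k :: W) := hc.cons k
        have hnot : ¬ (rchain (c+1)).Sublist (k :: W) := by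
          intro hbad
          rw [rchain_succ] at hbad
          rcases cons_sublist_cases hbad with hbad | ⟨heq, hbad⟩
          · exact hc1 (by rw [rchain_succ]; exact hbad)
          · rw [hk] at heq
            have : c + 1 = k.val := by
              have := congrArg SIdx.val heq
              simpa [SIdx.val] using this
            omega
        obtain ⟨c', hc'm, hch, hch1, heq⟩ := ih Xs' (k :: W) c
          hlen' hSIP' hγ' hchain hnot hcm
        refine ⟨c', hc'm, ?_, ?_, ?_⟩
        · rw [show γ ++ [k] ++ W = γ ++ (k :: W) from by simp]; exact hch
        · rw [show γ ++ [k] ++ W = γ ++ (k :: W) from by simp]; exact hch1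
        · rw [prodAssign_snoc γ Xs' k B hlen', Matrix.mul_assoc, hstep, heq]

end Main


lemma SIdx.eq_neg {k : SIdx} (h : k.isNeg = true) : k = .neg k.val := by
  cases k <;> simp_all [SIdx.isNeg, SIdx.val]

/-- **Lemma on row/column selection, `0 ∈ σ`.**
(a) If `c₀(σ) < m` then `(e^T_{m−c₀(σ)} ⊗ I_n) M_{σ₂}(X₂) M_{τ₂}(Y₂) =
e^T_{m−c₀(σ,σ₂)} ⊗ I_n`, and if `i₀(σ) < m` then
`M_{τ₁}(Y₁) M_{σ₁}(X₁) (e_{m−i₀(σ)} ⊗ I_n) = e_{m−i₀(σ₁,σ)} ⊗ I_n`.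
(b) If `c₀(σ) = m` then `(e^T_1 ⊗ I_n) M_{σ₂}(X₂) M_{τ₂}(Y₂) = e^T_1 ⊗ I_n`, and if
`i₀(σ) = m` then `M_{τ₁}(Y₁) M_{σ₁}(X₁) (e_1 ⊗ I_n) = e_1 ⊗ I_n`. -/
theorem egfp_row_col_selection' {m n : ℕ} (E : EGFPData m n)
    (h0 : SIdx.pos 0 ∈ E.sig) :
    ((consAt E.sig (.pos 0) < (m : ℤ) →
        rowSel m n ((m : ℤ) - consAt E.sig (.pos 0)) *
            (prodAssign m n E.sig2 E.X2 * prodAssign m n E.tau2 E.Y2) =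
          rowSel m n ((m : ℤ) - consAt (E.sig ++ E.sig2) (.pos 0))) ∧
      (invsAt E.sig (.pos 0) < (m : ℤ) →
        (prodAssign m n E.tau1 E.Y1 * prodAssign m n E.sig1 E.X1) *
            colSel m n ((m : ℤ) - invsAt E.sig (.pos 0)) =
          colSel m n ((m : ℤ) - invsAt (E.sig1 ++ E.sig) (.pos 0)))) ∧
    ((consAt E.sig (.pos 0) = (m : ℤ) →
        rowSel m n 1 * (prodAssign m n E.sig2 E.X2 * prodAssign m n E.tau2 E.Y2) =
          rowSel m n 1) ∧
      (invsAt E.sig (.pos 0) = (m : ℤ) →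
        (prodAssign m n E.tau1 E.Y1 * prodAssign m n E.sig1 E.X1) * colSel m n 1 =
          colSel m n 1)) := by
  classical
  have hm2 := E.hm
  have hnd : (E.sig.map SIdx.val ++ E.tau.map SIdx.val).Nodup :=
    E.hperm.nodup_iff.mpr List.nodup_range
  have hdisj := (List.nodup_append'.mp hnd).2.2
  have hbound : ∀ v ∈ E.tau.map SIdx.val, v < m + 1 := by
    intro v hv
    have : v ∈ List.range (m + 1) := E.hperm.mem_iff.mp (List.mem_append_right _ hv)
    simpa using this
  refine ⟨⟨?_, ?_⟩, ?_, ?_⟩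
  · -- (a) row
    intro hlt
    obtain ⟨c₀, hc₀⟩ : ∃ c : ℕ, consAt E.sig (.pos 0) = (c : ℤ) := by
      rw [consAt, if_pos h0]; exact ⟨_, rfl⟩
    obtain ⟨hc, hnc⟩ := (consAt_eq_iff h0).mp hc₀
    have hc₀m : c₀ < m := by rw [hc₀] at hlt; exact_mod_cast hlt
    obtain ⟨c', hc'm, hch, hch1, heq⟩ :=
      row_main (m := m) (n := n) E.sig1 E.sig2 E.X2 E.sig c₀ E.hX2.1 E.hSIPsig
        (fun k hk => ⟨E.hsigpos k (E.hsig2 k hk).1, (E.hsig2 k hk).2⟩) hc hnc hc₀m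
    have h0' : SIdx.pos 0 ∈ E.sig ++ E.sig2 := List.mem_append_left _ h0
    have hcons' : consAt (E.sig ++ E.sig2) (.pos 0) = (c' : ℤ) :=
      (consAt_eq_iff h0').mpr ⟨hch, hch1⟩
    have hc'sig : (c' : ℕ) ∈ E.sig.map SIdx.val := by
      have hmem : SIdx.pos c' ∈ E.sig ++ E.sig2 := hch.subset (pos_mem_pchain c')
      have hin : SIdx.pos c' ∈ E.sig := by
        rcases List.mem_append.mp hmem with h | h
        · exact h
        · exact (E.hsig2 _ h).1
      exact List.mem_map.mpr ⟨_, hin, rfl⟩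
    have hU : ∀ k ∈ E.tau2, Untouched m k (m - c' - 1) := by
      intro k hk
      obtain ⟨hkt, hk2⟩ := E.htau2 k hk
      have hkneg := E.htauneg k hkt
      have hkle : k.val < m + 1 := hbound _ (List.mem_map.mpr ⟨_, hkt, rfl⟩)
      have hne1 : k.val ≠ c' := by
        intro hkc
        exact hdisj hc'sig (by rw [← hkc]; exact List.mem_map.mpr ⟨_, hkt, rfl⟩)
      have hne2 : k.val ≠ c' + 1 := by
        intro hkc
        have hkform : k = .neg (c' + 1) := by rw [SIdx.eq_neg hkneg, hkc]
        have hsucc : k.succ = .neg c' := by rw [hkform]; rfl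
        have hmem2 : k.succ ∈ (E.tau1 ++ E.tau) ∨ k.succ ∈ E.tau2 :=
          sip_succ_mem E.hSIPtau (List.mem_append_right _ hkt) hk
        have hin : SIdx.neg c' ∈ E.tau := by
          rcases hmem2 with h | h
          · rw [hsucc] at h
            rcases List.mem_append.mp h with h | h
            · exact (E.htau1 _ h).1
            · exact h
          · rw [hsucc] at h
            exact (E.htau2 _ h).1
        exact hdisj hc'sig (List.mem_map.mpr ⟨_, hin, rfl⟩)
      exact ⟨by omega, fun h => by omega, fun h => by omega, fun h1 h2 => ⟨by omega, by omega⟩⟩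
    have huntouched := rowSel_prod_untouched (m := m) (n := n) (m - c' - 1) (by omega)
      E.tau2 E.Y2 hU
    rw [hc₀, hcons',
      show (m : ℤ) - (c₀ : ℤ) = ((↑(m - c₀ - 1) : ℤ) + 1) from by omega,
      show (m : ℤ) - (c' : ℤ) = ((↑(m - c' - 1) : ℤ) + 1) from by omega,
      ← Matrix.mul_assoc, heq, huntouched]
  · -- (a) col
    intro hlt
    obtain ⟨c₀, hc₀⟩ : ∃ c : ℕ, invsAt E.sig (.pos 0) = (c : ℤ) := by
      rw [invsAt, if_pos h0]; exact ⟨_, rfl⟩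
    obtain ⟨hc, hnc⟩ := (invsAt_eq_iff h0).mp hc₀
    have hc₀m : c₀ < m := by rw [hc₀] at hlt; exact_mod_cast hlt
    have hSIP' : SIP (E.sig1 ++ (E.sig ++ E.sig2)) := by
      rw [← List.append_assoc]; exact E.hSIPsig
    obtain ⟨c', hc'm, hch, hch1, heq⟩ :=
      col_main (m := m) (n := n) E.sig2 E.sig1 E.X1 E.sig c₀ E.hX1.1 hSIP'
        (fun k hk => ⟨E.hsigpos k (E.hsig1 k hk).1, (E.hsig1 k hk).2⟩) hc hnc hc₀m
    have h0' : SIdx.pos 0 ∈ E.sig1 ++ E.sig := List.mem_append_right _ h0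
    have hinvs' : invsAt (E.sig1 ++ E.sig) (.pos 0) = (c' : ℤ) :=
      (invsAt_eq_iff h0').mpr ⟨hch, hch1⟩
    have hc'sig : (c' : ℕ) ∈ E.sig.map SIdx.val := by
      have hmem : SIdx.pos c' ∈ E.sig1 ++ E.sig := hch.subset (pos_mem_rchain c')
      have hin : SIdx.pos c' ∈ E.sig := by
        rcases List.mem_append.mp hmem with h | h
        · exact (E.hsig1 _ h).1
        · exact h
      exact List.mem_map.mpr ⟨_, hin, rfl⟩
    have hU : ∀ k ∈ E.tau1, Untouched m k (m - c' - 1) := by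
      intro k hk
      obtain ⟨hkt, hk2⟩ := E.htau1 k hk
      have hkneg := E.htauneg k hkt
      have hkle : k.val < m + 1 := hbound _ (List.mem_map.mpr ⟨_, hkt, rfl⟩)
      have hne1 : k.val ≠ c' := by
        intro hkc
        exact hdisj hc'sig (by rw [← hkc]; exact List.mem_map.mpr ⟨_, hkt, rfl⟩)
      have hne2 : k.val ≠ c' + 1 := by
        intro hkc
        have hkform : k = .neg (c' + 1) := by rw [SIdx.eq_neg hkneg, hkc]
        have hsucc : k.succ = .neg c' := by rw [hkform]; rfl
        have hSIPt : SIP (E.tau1 ++ (E.tau ++ E.tau2)) := by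
          rw [← List.append_assoc]; exact E.hSIPtau
        have hmem2 : k.succ ∈ E.tau1 ∨ k.succ ∈ (E.tau ++ E.tau2) :=
          sip_succ_mem hSIPt hk (List.mem_append_left _ hkt)
        have hin : SIdx.neg c' ∈ E.tau := by
          rcases hmem2 with h | h
          · rw [hsucc] at h
            exact (E.htau1 _ h).1
          · rw [hsucc] at h
            rcases List.mem_append.mp h with h | h
            · exact h
            · exact (E.htau2 _ h).1
        exact hdisj hc'sig (List.mem_map.mpr ⟨_, hin, rfl⟩)
      exact ⟨by omega, fun h => by omega, fun h => by omega, fun h1 h2 => ⟨by omega, by omega⟩⟩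
    have huntouched := colSel_prod_untouched (m := m) (n := n) (m - c' - 1) (by omega)
      E.tau1 E.Y1 hU
    rw [hc₀, hinvs',
      show (m : ℤ) - (c₀ : ℤ) = ((↑(m - c₀ - 1) : ℤ) + 1) from by omega,
      show (m : ℤ) - (c' : ℤ) = ((↑(m - c' - 1) : ℤ) + 1) from by omega,
      Matrix.mul_assoc, heq, huntouched]
  · -- (b) row
    intro heqm
    obtain ⟨hc, hnc⟩ := (consAt_eq_iff h0).mp (by exact_mod_cast heqm)
    have htau_nil : E.tau = [] := by
      rw [List.eq_nil_iff_forall_not_mem]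
      intro k hk
      have hkv : k.val ∈ E.tau.map SIdx.val := List.mem_map.mpr ⟨_, hk, rfl⟩
      have hkle : k.val < m + 1 := hbound _ hkv
      have hin : SIdx.pos k.val ∈ E.sig := by
        have hmem : SIdx.pos k.val ∈ pchain m := mem_pchain_iff.mpr ⟨k.val, by omega, rfl⟩
        exact hc.subset hmem
      exact hdisj (List.mem_map.mpr ⟨_, hin, rfl⟩) hkv
    have htau2_nil : E.tau2 = [] := by
      rw [List.eq_nil_iff_forall_not_mem]
      intro k hk
      have := (E.htau2 k hk).1
      rw [htau_nil] at this
      simp at this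
    have hU : ∀ k ∈ E.sig2, Untouched m k 0 := by
      intro k hk
      have h2 := (E.hsig2 k hk).2
      exact ⟨by omega, fun h => by omega, fun h => by omega, fun h1 h2' => ⟨by omega, by omega⟩⟩
    have huntouched := rowSel_prod_untouched (m := m) (n := n) 0 (by omega) E.sig2 E.X2 hU
    rw [htau2_nil, prodAssign_nil, Matrix.mul_one,
      show (1 : ℤ) = (((0 : ℕ) : ℤ) + 1) from by norm_num, huntouched]
  · -- (b) col
    intro heqm
    obtain ⟨hc, hnc⟩ := (invsAt_eq_iff h0).mp (by exact_mod_cast heqm)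
    have htau_nil : E.tau = [] := by
      rw [List.eq_nil_iff_forall_not_mem]
      intro k hk
      have hkv : k.val ∈ E.tau.map SIdx.val := List.mem_map.mpr ⟨_, hk, rfl⟩
      have hkle : k.val < m + 1 := hbound _ hkv
      have hin : SIdx.pos k.val ∈ E.sig := by
        have hmem : SIdx.pos k.val ∈ rchain m := by
          rw [rchain, List.mem_reverse]
          exact mem_pchain_iff.mpr ⟨k.val, by omega, rfl⟩
        exact hc.subset hmem
      exact hdisj (List.mem_map.mpr ⟨_, hin, rfl⟩) hkv
    have htau1_nil : E.tau1 = [] := by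
      rw [List.eq_nil_iff_forall_not_mem]
      intro k hk
      have := (E.htau1 k hk).1
      rw [htau_nil] at this
      simp at this
    have hU : ∀ k ∈ E.sig1, Untouched m k 0 := by
      intro k hk
      have h2 := (E.hsig1 k hk).2
      exact ⟨by omega, fun h => by omega, fun h => by omega, fun h1 h2' => ⟨by omega, by omega⟩⟩
    have huntouched := colSel_prod_untouched (m := m) (n := n) 0 (by omega) E.sig1 E.X1 hU
    rw [htau1_nil, prodAssign_nil, Matrix.one_mul,
      show (1 : ℤ) = (((0 : ℕ) : ℤ) + 1) from by norm_num, huntouched]
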